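/- arXiv:1608.05928 — 3 statements merged into one kernel-verified Lean document; each statement's English description precedes it below -/
import Mathlib

section
/- For any Boolean map f : 𝔹^n → 𝔹^n, the map G_f : X → X defined by G_f(S,x) = (σ(S), F_f(S^0, x)) is continuous on the metric space (X, d). -/
noncomputable def de (n : ℕ) (E F : Fin n → Bool) : ℝ :=
  ∑ k : Fin n, if E k = F k then 0 else 1

noncomputable def ds (n : ℕ) (S T : ℕ → Fin n) : ℝ :=
  (9 / (n : ℝ)) * ∑' k : ℕ, |((S k : ℕ) : ℝ) - ((T k : ℕ) : ℝ)| / 10 ^ (k + 1)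

noncomputable def dX (n : ℕ) (X Y : (ℕ → Fin n) × (Fin n → Bool)) : ℝ :=
  de n X.2 Y.2 + ds n X.1 Y.1

def Ff (n : ℕ) (f : (Fin n → Bool) → Fin n → Bool) (i : Fin n) (x : Fin n → Bool) :
    Fin n → Bool :=
  Function.update x i (f x i)

def Gf (n : ℕ) (f : (Fin n → Bool) → Fin n → Bool)
    (X : (ℕ → Fin n) × (Fin n → Bool)) : (ℕ → Fin n) × (Fin n → Bool) :=
  (fun t => X.1 (t + 1), Ff n f (X.1 0) X.2)

def Gneg (n : ℕ) : (ℕ → Fin n) × (Fin n → Bool) → (ℕ → Fin n) × (Fin n → Bool) :=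
  Gf n (fun x i => !(x i))

/-!
Two points at distance `< 1` carry the same Boolean configuration, and two points at distance
`< 9 / (10 n)` start with the same strategy letter, since a differing first letter alone
contributes `9 / (10 n)`. For such points `G_f` updates both configurations identically and
only shifts the strategies, which multiplies their distance by at most `10`. Hence `G_f` is
`10`-Lipschitz on small balls.
-/

lemma one_le_abs_natCast_sub {a b : ℕ} (h : a ≠ b) : (1 : ℝ) ≤ |(a : ℝ) - b| := by
  have : (1 : ℤ) ≤ |(a : ℤ) - b| := Int.one_le_abs (sub_ne_zero.mpr (by exact_mod_cast h))
  exact_mod_cast this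

lemma summable_ds_terms (n : ℕ) (S T : ℕ → Fin n) :
    Summable (fun k : ℕ => |((S k : ℕ) : ℝ) - ((T k : ℕ) : ℝ)| / 10 ^ (k + 1)) := by
  have hgeom : Summable (fun k : ℕ => (n : ℝ) * (1 / 10) ^ k) :=
    (summable_geometric_of_lt_one (by norm_num) (by norm_num)).mul_left _
  refine Summable.of_nonneg_of_le (fun k => by positivity) (fun k => ?_) hgeom
  have hdiff : |((S k : ℕ) : ℝ) - ((T k : ℕ) : ℝ)| ≤ n :=
    (abs_sub_lt_of_nonneg_of_lt (Nat.cast_nonneg _) (by exact_mod_cast (S k).2)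
      (Nat.cast_nonneg _) (by exact_mod_cast (T k).2)).le
  calc |((S k : ℕ) : ℝ) - ((T k : ℕ) : ℝ)| / 10 ^ (k + 1)
      ≤ n / 10 ^ k := div_le_div₀ (Nat.cast_nonneg _) hdiff (by positivity)
        (pow_le_pow_right₀ (by norm_num) k.le_succ)
    _ = n * (1 / 10) ^ k := by rw [one_div_pow, mul_one_div]

lemma de_nonneg (n : ℕ) (E F : Fin n → Bool) : 0 ≤ de n E F :=
  Finset.sum_nonneg fun _ _ => by positivity

lemma de_self (n : ℕ) (E : Fin n → Bool) : de n E E = 0 := by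
  simp [de]

lemma eq_of_de_lt_one {n : ℕ} {E F : Fin n → Bool} (h : de n E F < 1) : E = F := by
  by_contra hne
  obtain ⟨k, hk⟩ := Function.ne_iff.mp hne
  have : (1 : ℝ) ≤ de n E F := by
    unfold de
    simpa [hk] using Finset.single_le_sum (f := fun j => if E j = F j then (0 : ℝ) else 1)
      (fun _ _ => by positivity) (Finset.mem_univ k)
  linarith

lemma ds_nonneg (n : ℕ) (S T : ℕ → Fin n) : 0 ≤ ds n S T :=
  mul_nonneg (by positivity) (tsum_nonneg fun _ => by positivity)

lemma head_eq_of_ds_lt {n : ℕ} {S T : ℕ → Fin n} (h : ds n S T < 9 / (10 * n)) : S 0 = T 0 := by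
  by_contra hne
  have hfirst : (1 : ℝ) / 10 ≤ ∑' k, |((S k : ℕ) : ℝ) - ((T k : ℕ) : ℝ)| / 10 ^ (k + 1) :=
    calc (1 : ℝ) / 10 ≤ |((S 0 : ℕ) : ℝ) - ((T 0 : ℕ) : ℝ)| / 10 ^ (0 + 1) := by
          rw [zero_add, pow_one]
          exact div_le_div_of_nonneg_right (one_le_abs_natCast_sub (Fin.val_ne_of_ne hne))
            (by norm_num)
      _ ≤ _ := (summable_ds_terms n S T).le_tsum 0 fun _ _ => by positivity
  have : 9 / (10 * (n : ℝ)) ≤ ds n S T :=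
    calc 9 / (10 * (n : ℝ)) = 9 / n * (1 / 10) := by rw [mul_comm, div_mul_div_comm, mul_one]
      _ ≤ ds n S T := mul_le_mul_of_nonneg_left hfirst (by positivity)
  linarith

lemma ds_tail_le (n : ℕ) (S T : ℕ → Fin n) :
    ds n (fun t => S (t + 1)) (fun t => T (t + 1)) ≤ 10 * ds n S T := by
  set a : ℕ → ℝ := fun k => |((S k : ℕ) : ℝ) - ((T k : ℕ) : ℝ)| / 10 ^ (k + 1)
  have hshift : ∑' k, |((S (k + 1) : ℕ) : ℝ) - ((T (k + 1) : ℕ) : ℝ)| / 10 ^ (k + 1)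
      = 10 * ∑' k, a (k + 1) := by
    rw [← tsum_mul_left]; congr 1; funext k; simp only [a]; ring
  have hsplit : ∑' k, a k = a 0 + ∑' k, a (k + 1) := (summable_ds_terms n S T).tsum_eq_zero_add
  have ha0 : 0 ≤ a 0 := by positivity
  have hn : (0 : ℝ) ≤ 9 / n := by positivity
  simp only [ds]
  rw [hshift]
  nlinarith

lemma dX_Gf_le {n : ℕ} (f : (Fin n → Bool) → Fin n → Bool) {X Y : (ℕ → Fin n) × (Fin n → Bool)}
    (h₁ : dX n X Y < 1) (h₂ : dX n X Y < 9 / (10 * n)) :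
    dX n (Gf n f X) (Gf n f Y) ≤ 10 * dX n X Y := by
  obtain ⟨S, E⟩ := X
  obtain ⟨T, F⟩ := Y
  simp only [dX] at h₁ h₂ ⊢
  have hde := de_nonneg n E F
  have hds := ds_nonneg n S T
  have hEF : E = F := eq_of_de_lt_one (by linarith)
  have hST : S 0 = T 0 := head_eq_of_ds_lt (by linarith)
  simp only [Gf, hEF, hST, de_self, zero_add]
  linarith [ds_tail_le n S T]

theorem stmt3_general (n : ℕ) (f : (Fin n → Bool) → Fin n → Bool) :
    ∀ X : (ℕ → Fin n) × (Fin n → Bool), ∀ ε > (0 : ℝ), ∃ δ > (0 : ℝ),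
      ∀ Y, dX n X Y < δ → dX n (Gf n f X) (Gf n f Y) < ε := by
  intro X ε hε
  have hn : (0 : ℝ) < n := by exact_mod_cast (X.1 0).pos
  refine ⟨min (ε / 10) (min 1 (9 / (10 * n))), by positivity, fun Y hY => ?_⟩
  obtain ⟨hε', h₁, h₂⟩ : dX n X Y < ε / 10 ∧ dX n X Y < 1 ∧ dX n X Y < 9 / (10 * n) := by
    simpa only [lt_min_iff] using hY
  linarith [dX_Gf_le f h₁ h₂]

theorem stmt3 (n : ℕ) (hn : 1 ≤ n) (f : (Fin n → Bool) → Fin n → Bool) :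
    ∀ X : (ℕ → Fin n) × (Fin n → Bool), ∀ ε > (0 : ℝ), ∃ δ > (0 : ℝ),
      ∀ Y, dX n X Y < δ → dX n (Gf n f X) (Gf n f Y) < ε :=
  stmt3_general n f
end

section
/- G_¬ is expansive with expansivity constant 1: for all X, Y ∈ X with X ≠ Y, there exists k ∈ ℕ such that d(G_¬^k(X), G_¬^k(Y)) ≥ 1. -/
lemma de_ge_one (n : ℕ) (E F : Fin n → Bool) (j : Fin n) (h : E j ≠ F j) :
    1 ≤ de n E F := by
  unfold de
  have := Finset.single_le_sum (f := fun k : Fin n => if E k = F k then (0:ℝ) else 1)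
      (fun i _ => by by_cases h' : E i = F i <;> simp [h']) (Finset.mem_univ j)
  simpa [h] using this

lemma dX_ge_one (n : ℕ) (X Y : (ℕ → Fin n) × (Fin n → Bool)) (j : Fin n)
    (h : X.2 j ≠ Y.2 j) : 1 ≤ dX n X Y := by
  calc (1:ℝ) ≤ de n X.2 Y.2 := de_ge_one n _ _ j h
    _ ≤ dX n X Y := le_add_of_nonneg_right (ds_nonneg n _ _)

lemma Gneg_iter_fst (n k : ℕ) (X : (ℕ → Fin n) × (Fin n → Bool)) :
    ((Gneg n)^[k] X).1 = fun t => X.1 (t + k) := by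
  induction k generalizing X with
  | zero => simp
  | succ k ih =>
    rw [Function.iterate_succ_apply, ih]
    funext t
    simp only [Gneg, Gf]
    exact congrArg X.1 (by omega)

lemma Gneg_iter_snd (n k : ℕ) (X Y : (ℕ → Fin n) × (Fin n → Bool))
    (hS : ∀ t < k, X.1 t = Y.1 t) (hE : X.2 = Y.2) :
    ((Gneg n)^[k] X).2 = ((Gneg n)^[k] Y).2 := by
  induction k generalizing X Y with
  | zero => simpa
  | succ k ih =>
    rw [Function.iterate_succ_apply, Function.iterate_succ_apply]
    apply ih
    · intro t ht
      simpa [Gneg, Gf] using hS (t + 1) (by omega)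
    · simp [Gneg, Gf, hE, hS 0 (by omega)]

theorem stmt7 (n : ℕ) (hn : 1 ≤ n) :
    ∀ X Y : (ℕ → Fin n) × (Fin n → Bool), X ≠ Y →
      ∃ k : ℕ, 1 ≤ dX n ((Gneg n)^[k] X) ((Gneg n)^[k] Y) := by
  classical
  intro X Y hXY
  by_cases hE : X.2 = Y.2
  · have hS : X.1 ≠ Y.1 := fun h => hXY (Prod.ext h hE)
    have hex : ∃ m, X.1 m ≠ Y.1 m := by
      by_contra h; push_neg at h; exact hS (funext h)
    set m := Nat.find hex with hmdef
    have hm : X.1 m ≠ Y.1 m := Nat.find_spec hex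
    have hlt : ∀ t < m, X.1 t = Y.1 t := fun t ht => not_not.mp (Nat.find_min hex ht)
    refine ⟨m + 1, ?_⟩
    rw [Function.iterate_succ_apply', Function.iterate_succ_apply']
    set A := (Gneg n)^[m] X with hA
    set B := (Gneg n)^[m] Y with hB
    have hA1 : A.1 0 = X.1 m := by rw [hA, Gneg_iter_fst]; simp
    have hB1 : B.1 0 = Y.1 m := by rw [hB, Gneg_iter_fst]; simp
    have hsnd : A.2 = B.2 := Gneg_iter_snd n m X Y hlt hE
    apply dX_ge_one n _ _ (X.1 m)
    simp only [Gneg, Gf, Ff, hA1, hB1, hsnd]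
    rw [Function.update_self, Function.update_of_ne hm]
    simp
  · obtain ⟨j, hj⟩ : ∃ j, X.2 j ≠ Y.2 j := by
      by_contra h; push_neg at h; exact hE (funext h)
    exact ⟨0, by simpa using dX_ge_one n X Y j hj⟩
end

section
/- The asynchronous iterations of the negation function are Devaney-chaotic: G_¬ is topologically transitive, its periodic points are dense in X, and it has sensitive dependence on initial conditions (which, on this infinite metric space, also follows from transitivity plus dense periodic points). -/
/-!
Two points are within `10⁻ᵐ` of each other as soon as their configurations agree and their
strategies share their first `m` terms, since the remaining terms contribute at most
`(1 - 1/n) 10⁻ᵐ`. Any configuration can be turned into any other by a finite word of flips, so a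
strategy with a prescribed prefix can be continued to reach any point exactly (transitivity),
or to return to its initial configuration and then repeat itself (periodic points). Replacing
the `m`-th term of a strategy by another index keeps the first `m` terms, but after `m + 1`
steps the two configurations differ in two bits, hence are at distance at least `2`.
-/

def flipAt {n : ℕ} (j : Fin n) (E : Fin n → Bool) : Fin n → Bool :=
  Function.update E j (!E j)

def flipList {n : ℕ} (l : List (Fin n)) (E : Fin n → Bool) : Fin n → Bool :=
  l.foldl (fun F j => flipAt j F) E

lemma flipList_append {n : ℕ} (l₁ l₂ : List (Fin n)) (E : Fin n → Bool) :
    flipList (l₁ ++ l₂) E = flipList l₂ (flipList l₁ E) :=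
  List.foldl_append

lemma flipList_apply_of_nodup {n : ℕ} {l : List (Fin n)} (hl : l.Nodup) (E : Fin n → Bool)
    (j : Fin n) : flipList l E j = if j ∈ l then !E j else E j := by
  induction l generalizing E with
  | nil => rfl
  | cons a l ih =>
    rw [List.nodup_cons] at hl
    rw [flipList, List.foldl_cons, ← flipList, ih hl.2]
    by_cases hja : j = a
    · subst hja
      simp [flipAt, hl.1]
    · simp [flipAt, hja]

lemma exists_flipList_eq {n : ℕ} (E F : Fin n → Bool) : ∃ l, flipList l E = F := by
  refine ⟨(List.finRange n).filter fun j => E j != F j, funext fun j => ?_⟩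
  rw [flipList_apply_of_nodup ((List.nodup_finRange n).filter _)]
  cases hE : E j <;> cases hF : F j <;> simp [hE, hF]

lemma Stream'.take_take_append_append_stream {α : Type*} (S U : Stream' α) (l : List α)
    (m : ℕ) : ((S.take m ++ l) ++ₛ U).take m = S.take m := by
  rw [Stream'.append_append_stream,
    Stream'.take_append_of_le_length (h := (Stream'.length_take m S).ge),
    List.take_of_length_le (by simp)]

lemma Fin.abs_sub_val_le {n : ℕ} (a b : Fin n) :
    |((a : ℕ) : ℝ) - ((b : ℕ) : ℝ)| ≤ n - 1 := by
  have ha : ((a : ℕ) : ℝ) + 1 ≤ n := by exact_mod_cast a.isLt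
  have hb : ((b : ℕ) : ℝ) + 1 ≤ n := by exact_mod_cast b.isLt
  rw [abs_le]
  constructor <;> linarith [(a : ℕ).cast_nonneg (α := ℝ), (b : ℕ).cast_nonneg (α := ℝ)]

lemma ds_lt_of_take_eq {n m : ℕ} {S T : ℕ → Fin n} (h : Stream'.take m S = Stream'.take m T) :
    ds n S T < (1 / 10) ^ m := by
  have hn : (0 : ℝ) < n := Nat.cast_pos.2 (S 0).pos
  set f : ℕ → ℝ := fun k => |((S k : ℕ) : ℝ) - ((T k : ℕ) : ℝ)| / 10 ^ (k + 1) with hf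
  have hf_le : ∀ k, f k ≤ (n - 1) / 10 * (1 / 10) ^ k := by
    intro k
    calc f k ≤ (n - 1) / 10 ^ (k + 1) :=
          div_le_div_of_nonneg_right (Fin.abs_sub_val_le (S k) (T k)) (by positivity)
      _ = (n - 1) / 10 * (1 / 10) ^ k := by rw [one_div_pow, pow_succ]; field_simp
  have hf_zero : ∀ k < m, f k = 0 := by
    intro k hk
    have hk' : some (S k) = some (T k) :=
      (Stream'.getElem?_take (s := S) hk).symm.trans ((congrArg (·[k]?) h).trans
        (Stream'.getElem?_take (s := T) hk))
    simp [hf, Option.some_inj.1 hk']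
  have hf_summable : Summable f :=
    .of_nonneg_of_le (fun k => by positivity) hf_le
      ((summable_geometric_of_lt_one (by norm_num) (by norm_num)).mul_left _)
  have htail : HasSum (fun k => ((n : ℝ) - 1) / 10 * (1 / 10) ^ m * (1 / 10) ^ k)
      (((n : ℝ) - 1) / 10 * (1 / 10) ^ m * (1 - 1 / 10)⁻¹) :=
    (hasSum_geometric_of_lt_one (by norm_num) (by norm_num)).mul_left _
  have hsum : ∑' k, f k ≤ (n - 1) / 10 * (1 / 10) ^ m * (1 - 1 / 10)⁻¹ := by
    rw [← hf_summable.sum_add_tsum_nat_add m,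
      Finset.sum_eq_zero fun k hk => hf_zero k (Finset.mem_range.1 hk), zero_add]
    refine hasSum_le (fun k => ?_) ((summable_nat_add_iff m).2 hf_summable).hasSum htail
    calc f (k + m) ≤ (n - 1) / 10 * (1 / 10) ^ (k + m) := hf_le _
      _ = (n - 1) / 10 * (1 / 10) ^ m * (1 / 10) ^ k := by ring
  calc ds n S T = 9 / n * ∑' k, f k := rfl
    _ ≤ 9 / n * ((n - 1) / 10 * (1 / 10) ^ m * (1 - 1 / 10)⁻¹) := by gcongr
    _ = (1 - 1 / n) * (1 / 10) ^ m := by field_simp; ring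
    _ < (1 / 10) ^ m := by
      have : (0 : ℝ) < 1 / n := by positivity
      nlinarith [pow_pos (by norm_num : (0 : ℝ) < 1 / 10) m]

lemma dX_self {n : ℕ} (X : (ℕ → Fin n) × (Fin n → Bool)) : dX n X X = 0 := by
  simp [dX, de, ds]

lemma dX_lt_of_take_eq {n m : ℕ} {S T : Stream' (Fin n)} (E : Fin n → Bool)
    (h : S.take m = T.take m) : dX n (S, E) (T, E) < (1 / 10) ^ m := by
  simpa [dX, de] using ds_lt_of_take_eq h

lemma two_le_de {n : ℕ} {E F : Fin n → Bool} {i j : Fin n} (hij : i ≠ j)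
    (hi : E i ≠ F i) (hj : E j ≠ F j) : 2 ≤ de n E F :=
  calc (2 : ℝ) = ∑ k ∈ {i, j}, if E k = F k then 0 else 1 := by
        rw [Finset.sum_pair hij, if_neg hi, if_neg hj]; norm_num
    _ ≤ de n E F :=
        Finset.sum_le_sum_of_subset_of_nonneg (Finset.subset_univ _) fun _ _ _ => by positivity

lemma two_le_dX_flipAt {n : ℕ} {S : ℕ → Fin n} {E : Fin n → Bool} {i j : Fin n}
    (hij : i ≠ j) : 2 ≤ dX n (S, flipAt i E) (S, flipAt j E) := by
  have hde : 2 ≤ de n (flipAt i E) (flipAt j E) :=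
    two_le_de hij (by simp [flipAt, Function.update_of_ne hij])
      (by simp [flipAt, Function.update_of_ne hij.symm])
  simpa [dX, ds] using hde

lemma Gneg_cons {n : ℕ} (a : Fin n) (T : Stream' (Fin n)) (E : Fin n → Bool) :
    Gneg n (Stream'.cons a T, E) = (T, flipAt a E) :=
  rfl

lemma Gneg_iterate_append_stream {n : ℕ} (l : List (Fin n)) (T : Stream' (Fin n))
    (E : Fin n → Bool) : (Gneg n)^[l.length] (l ++ₛ T, E) = (T, flipList l E) := by
  induction l generalizing E with
  | nil => rfl
  | cons a l ih =>
    rw [List.length_cons, Function.iterate_succ_apply, Stream'.cons_append_stream, Gneg_cons]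
    exact ih (flipAt a E)

theorem Gneg_transitive {n : ℕ} (S T : Stream' (Fin n)) (E F : Fin n → Bool) {rX rY : ℝ}
    (hrX : 0 < rX) (hrY : 0 < rY) :
    ∃ X' t, dX n (S, E) X' < rX ∧ dX n ((Gneg n)^[t] X') (T, F) < rY := by
  obtain ⟨m, hm⟩ := exists_pow_lt_of_lt_one hrX (by norm_num : (1 / 10 : ℝ) < 1)
  obtain ⟨c, hc⟩ := exists_flipList_eq (flipList (S.take m) E) F
  set L := S.take m ++ c
  refine ⟨(L ++ₛ T, E), L.length,
    (dX_lt_of_take_eq E (Stream'.take_take_append_append_stream _ _ _ _).symm).trans hm, ?_⟩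
  rw [Gneg_iterate_append_stream, flipList_append, hc]
  exact (dX_self _).trans_lt hrY

theorem Gneg_periodic_dense {n : ℕ} (S : Stream' (Fin n)) (E : Fin n → Bool) {ε : ℝ}
    (hε : 0 < ε) : ∃ P p, 1 ≤ p ∧ (Gneg n)^[p] P = P ∧ dX n (S, E) P < ε := by
  obtain ⟨m, hm⟩ := exists_pow_lt_of_lt_one hε (by norm_num : (1 / 10 : ℝ) < 1)
  -- a prefix of length `m + 1` rather than `m` makes the period word nonempty
  obtain ⟨c, hc⟩ := exists_flipList_eq (flipList (S.take (m + 1)) E) E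
  set L := S.take (m + 1) ++ c
  have hL : m + 1 ≤ L.length := by simp [L]
  have hL₀ : L ≠ [] := List.ne_nil_of_length_pos (by omega)
  refine ⟨(Stream'.cycle L hL₀, E), L.length, by omega, ?_, ?_⟩
  · have h := Gneg_iterate_append_stream L (Stream'.cycle L hL₀) E
    rwa [← Stream'.cycle_eq, flipList_append, hc] at h
  · have htake : S.take (m + 1) = (Stream'.cycle L hL₀).take (m + 1) := by
      rw [Stream'.cycle_eq, Stream'.take_take_append_append_stream]
    calc dX n (S, E) (Stream'.cycle L hL₀, E) < (1 / 10) ^ (m + 1) := dX_lt_of_take_eq E htake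
      _ ≤ (1 / 10) ^ m := pow_le_pow_of_le_one (by norm_num) (by norm_num) (by omega)
      _ < ε := hm

theorem Gneg_sensitive {n : ℕ} (hn : 2 ≤ n) (S : Stream' (Fin n)) (E : Fin n → Bool)
    {ε : ℝ} (hε : 0 < ε) :
    ∃ X' t, dX n (S, E) X' < ε ∧ dX n ((Gneg n)^[t] (S, E)) ((Gneg n)^[t] X') > 1 := by
  have : Nontrivial (Fin n) := Fin.nontrivial_iff_two_le.2 hn
  obtain ⟨m, hm⟩ := exists_pow_lt_of_lt_one hε (by norm_num : (1 / 10 : ℝ) < 1)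
  obtain ⟨j, hj⟩ := exists_ne (S.get m)
  set U := S.drop (m + 1)
  have hiter : ∀ i, (Gneg n)^[m + 1] ((S.take m ++ [i]) ++ₛ U, E) =
      (U, flipAt i (flipList (S.take m) E)) := by
    intro i
    have h := Gneg_iterate_append_stream (S.take m ++ [i]) U E
    rwa [List.length_append, Stream'.length_take, List.length_singleton, flipList_append] at h
  have hS : S = (S.take m ++ [S.get m]) ++ₛ U := by
    rw [Stream'.concat_take_get, Stream'.append_take_drop]
  refine ⟨((S.take m ++ [j]) ++ₛ U, E), m + 1,
    (dX_lt_of_take_eq E (Stream'.take_take_append_append_stream _ _ _ _).symm).trans hm, ?_⟩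
  have hiterS := hiter (S.get m)
  rw [← hS] at hiterS
  rw [hiterS, hiter j]
  exact one_lt_two.trans_le (two_le_dX_flipAt hj.symm)

theorem stmt14 (n : ℕ) (hn : 2 ≤ n) :
    (∀ X Y : (ℕ → Fin n) × (Fin n → Bool), ∀ rX > (0 : ℝ), ∀ rY > (0 : ℝ),
      ∃ X' t, dX n X X' < rX ∧ dX n ((Gneg n)^[t] X') Y < rY) ∧
    (∀ X : (ℕ → Fin n) × (Fin n → Bool), ∀ ε > (0 : ℝ),
      ∃ P p, 1 ≤ p ∧ (Gneg n)^[p] P = P ∧ dX n X P < ε) ∧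
    (∃ δ > (0 : ℝ), ∀ X : (ℕ → Fin n) × (Fin n → Bool), ∀ ε > (0 : ℝ),
      ∃ X' t, dX n X X' < ε ∧ dX n ((Gneg n)^[t] X) ((Gneg n)^[t] X') > δ) :=
  ⟨fun X Y _ hrX _ hrY => Gneg_transitive X.1 Y.1 X.2 Y.2 hrX hrY,
    fun X _ hε => Gneg_periodic_dense X.1 X.2 hε,
    1, one_pos, fun X _ hε => Gneg_sensitive hn X.1 X.2 hε⟩
end
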